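/- arXiv:1110.1044 — 4 statements merged into one kernel-verified Lean document; each statement's English description precedes it below -/
import Mathlib

section
/- Let k_1, k_2 ∈ ℕ and, for 1 ≤ j ≤ k_1 − 1, let X_j and X_{j+1} be the numbers of draws until the j-th and (j+1)-th successes respectively in one run of repeated random sampling without replacement from a population of size k_1 + k_2 with k_1 successes. Then the conditional law of X_{j+1} − X_j given X_j = k is stochastically smaller than a geometric distribution with parameter k_1/(k_1+k_2) − j/(k_1+k_2): for every m and every admissible k, P(X_{j+1} − X_j ≥ m | X_j = k) ≤ P(Geo((k_1 − j)/(k_1+k_2)) ≥ m). -/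
/-!
Because `π` need not be measurable, conditional probabilities of the events `{π ∈ E}` are
controlled through measurable hulls; uniformity of `π` still gives
`P[π ∈ F | π ∈ E] ≤ #(E ∩ F) / #E`, so it suffices to count permutations.

Let `A i` be the set of permutations with `X_j = k` and no success among the draws
`k + 1, …, k + i`. For `σ ∈ A i` the draws from `k + i + 1` on contain exactly `#S - j`
successes, and composing `σ` with the transposition that brings any one of them to draw
`k + i + 1` stays in `A i` and makes that draw a success. This injects the `#A i · (#S - j)`
such pairs (permutation, later success) into `(A i \ A (i + 1)) × Fin N`, so
`#A (i + 1) ≤ (1 - (#S - j) / N) · #A i`, and the conditional frequency of a gap of at least `m`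
is at most the geometric tail `(1 - p) ^ (m - 1)`.
-/

open MeasureTheory ProbabilityTheory

namespace RumorSpreading

/-- `X` has the geometric distribution on `{1,2,...}` with parameter `p`:
`P(X = k) = p(1-p)^(k-1)` for `k ≥ 1`. -/
def HasGeom {Ω : Type*} [MeasurableSpace Ω] (P : Measure Ω) (X : Ω → ℕ) (p : ℝ) : Prop :=
  ∀ k : ℕ, P {ω | X ω = k} = if k = 0 then 0 else ENNReal.ofReal (p * (1 - p) ^ (k - 1))

/-- In one run of sampling without replacement given by drawing the population
`Fin N` in the order `π 0, π 1, π 2, ...` (where `π` is a permutation of `Fin N`),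
`waitTime S π j` is the number of draws until the `j`-th element of `S` ("success")
appears. -/
noncomputable def waitTime {N : ℕ} (S : Finset (Fin N)) (π : Equiv.Perm (Fin N))
    (j : ℕ) : ℕ :=
  sInf {m | j ≤ (Finset.univ.filter fun i : Fin N => (i : ℕ) < m ∧ π i ∈ S).card}

open Finset Equiv
open scoped ENNReal

section Counting

variable {N : ℕ} (S : Finset (Fin N))

def successCount (σ : Perm (Fin N)) (m : ℕ) : ℕ :=
  #{i : Fin N | (i : ℕ) < m ∧ σ i ∈ S}

lemma successCount_mono (σ : Perm (Fin N)) : Monotone (successCount S σ) :=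
  fun _ _ h => card_le_card fun i => by
    simp only [mem_filter, mem_univ, true_and]
    exact fun hi => ⟨hi.1.trans_le h, hi.2⟩

lemma successCount_succ_le (σ : Perm (Fin N)) (m : ℕ) :
    successCount S σ (m + 1) ≤ successCount S σ m + 1 := by
  have hsub : ({i : Fin N | (i : ℕ) < m + 1 ∧ σ i ∈ S} : Finset (Fin N)) ⊆
      ({i : Fin N | (i : ℕ) < m ∧ σ i ∈ S} : Finset (Fin N)) ∪
        ({i : Fin N | (i : ℕ) = m} : Finset (Fin N)) := by
    intro i hi
    simp only [mem_filter, mem_univ, true_and, mem_union] at hi ⊢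
    rcases Nat.lt_succ_iff_lt_or_eq.mp hi.1 with h | h
    exacts [.inl ⟨h, hi.2⟩, .inr h]
  have hone : #({i : Fin N | (i : ℕ) = m} : Finset (Fin N)) ≤ 1 :=
    card_le_one.mpr fun a ha b hb => Fin.ext <| by simp_all
  have := (card_le_card hsub).trans (card_union_le _ _)
  simp only [successCount]
  omega

lemma successCount_succ_of_mem (σ : Perm (Fin N)) {m : ℕ} (hm : m < N)
    (hS : σ ⟨m, hm⟩ ∈ S) :
    successCount S σ (m + 1) = successCount S σ m + 1 := by
  have : ({i : Fin N | (i : ℕ) < m + 1 ∧ σ i ∈ S} : Finset (Fin N)) =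
      insert ⟨m, hm⟩ ({i : Fin N | (i : ℕ) < m ∧ σ i ∈ S} : Finset (Fin N)) := by
    ext i
    simp only [mem_filter, mem_univ, true_and, mem_insert, Fin.ext_iff]
    constructor
    · rintro ⟨hi, hiS⟩
      rcases Nat.lt_succ_iff_lt_or_eq.mp hi with hi | hi
      · exact .inr ⟨hi, hiS⟩
      · exact .inl hi
    · rintro (hi | ⟨hi, hiS⟩)
      · exact ⟨by omega, by rwa [show i = ⟨m, hm⟩ from Fin.ext hi]⟩
      · exact ⟨by omega, hiS⟩
  rw [successCount, this, card_insert_of_notMem (by simp)]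
  rfl

lemma card_filter_le_and_mem_add_successCount (σ : Perm (Fin N)) (m : ℕ) :
    #{r : Fin N | m ≤ (r : ℕ) ∧ σ r ∈ S} + successCount S σ m = #S := by
  have hS : #{r : Fin N | σ r ∈ S} = #S :=
    card_bij (fun r _ => σ r) (by simp) (fun _ _ _ _ h => σ.injective h)
      (fun b _ => ⟨σ.symm b, by simpa, by simp⟩)
  rw [← hS, ← card_filter_add_card_filter_not (s := {r | σ r ∈ S})
    (fun r : Fin N => m ≤ (r : ℕ))]
  simp only [filter_filter, successCount, not_le]
  congr 2 <;> ext r <;> simp [and_comm]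

lemma successCount_eq_card (σ : Perm (Fin N)) : successCount S σ N = #S := by
  have hempty : #{r : Fin N | N ≤ (r : ℕ) ∧ σ r ∈ S} = 0 :=
    card_eq_zero.mpr <| filter_eq_empty_iff.mpr fun r _ h => (not_le.mpr r.is_lt) h.1
  simpa [hempty] using card_filter_le_and_mem_add_successCount S σ N

lemma successCount_congr {σ τ : Perm (Fin N)} {m : ℕ}
    (h : ∀ i : Fin N, (i : ℕ) < m → τ i = σ i) :
    successCount S τ m = successCount S σ m := by
  unfold successCount
  congr 1
  exact filter_congr fun i _ => and_congr_right fun hi => by rw [h i hi]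

lemma successCount_lt_of_lt_waitTime {σ : Perm (Fin N)} {j t : ℕ} (ht : t < waitTime S σ j) :
    successCount S σ t < j :=
  not_le.mp (Nat.notMem_of_lt_sInf (s := {m | j ≤ successCount S σ m}) ht)

lemma successCount_waitTime_le (σ : Perm (Fin N)) (j : ℕ) :
    successCount S σ (waitTime S σ j) ≤ j := by
  cases hw : waitTime S σ j with
  | zero => simp [successCount]
  | succ t =>
    have hlt := successCount_lt_of_lt_waitTime S (σ := σ) (j := j) (t := t) (by omega)
    have := successCount_succ_le S σ t
    omega

lemma le_successCount_waitTime (σ : Perm (Fin N)) {j : ℕ} (hj : j ≤ #S) :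
    j ≤ successCount S σ (waitTime S σ j) :=
  Nat.sInf_mem (s := {m | j ≤ successCount S σ m})
    ⟨N, by rwa [Set.mem_ofPred_eq, successCount_eq_card]⟩

lemma waitTime_eq_iff {σ : Perm (Fin N)} {j k : ℕ} (hj : j ≤ #S) :
    waitTime S σ j = k ↔ j ≤ successCount S σ k ∧ ∀ t < k, successCount S σ t < j := by
  constructor
  · rintro rfl
    exact ⟨le_successCount_waitTime S σ hj, fun t ht => successCount_lt_of_lt_waitTime S ht⟩
  · rintro ⟨hk, hlt⟩
    refine le_antisymm (Nat.sInf_le hk) (not_lt.mp fun h => ?_)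
    exact (hlt _ h).not_ge (le_successCount_waitTime S σ hj)

lemma waitTime_eq_of_eqOn {σ τ : Perm (Fin N)} {j L : ℕ} (hj : j ≤ #S)
    (hL : waitTime S σ j ≤ L) (h : ∀ i : Fin N, (i : ℕ) < L → τ i = σ i) :
    waitTime S τ j = waitTime S σ j := by
  have hcount : ∀ t ≤ L, successCount S τ t = successCount S σ t :=
    fun t ht => successCount_congr S fun i hi => h i (hi.trans_le ht)
  rw [waitTime_eq_iff S hj, hcount _ hL]
  refine ⟨le_successCount_waitTime S σ hj, fun t ht => ?_⟩
  rw [hcount t (by omega)]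
  exact successCount_lt_of_lt_waitTime S ht

end Counting

section Gap

variable {N : ℕ} (S : Finset (Fin N)) {j k : ℕ}

/-- `X_j = k` and none of the draws `k + 1, …, k + i` is a success. -/
noncomputable def gapExceeds (j k i : ℕ) : Finset (Perm (Fin N)) :=
  {σ | waitTime S σ j = k ∧ successCount S σ (k + i) ≤ j}

lemma gapExceeds_zero_subset : gapExceeds S j k 0 ⊆ ({σ | waitTime S σ j = k} : Finset _) :=
  fun _ hσ => mem_filter.mpr ⟨mem_univ _, (mem_filter.mp hσ).2.1⟩

lemma inter_subset_gapExceeds (m : ℕ) :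
    ({σ | waitTime S σ j = k ∧ m ≤ waitTime S σ (j + 1) - waitTime S σ j} : Finset _) ⊆
      gapExceeds S j k (m - 1) := by
  intro σ hσ
  obtain ⟨hk, hm⟩ := (mem_filter.mp hσ).2
  rw [hk] at hm
  refine mem_filter.mpr ⟨mem_univ _, hk, ?_⟩
  rcases m.eq_zero_or_pos with rfl | hm0
  · exact hk ▸ successCount_waitTime_le S σ j
  · exact Nat.lt_add_one_iff.mp (successCount_lt_of_lt_waitTime S (j := j + 1) (by omega))

lemma gapExceeds_eq_empty (hj : j < #S) {i : ℕ} (h : N ≤ k + i) : gapExceeds S j k i = ∅ :=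
  filter_eq_empty_iff.mpr fun σ _ hσ => by
    have := successCount_mono S σ h
    rw [successCount_eq_card] at this
    omega

lemma successCount_eq_of_mem_gapExceeds (hj : j ≤ #S) {i : ℕ} {σ : Perm (Fin N)}
    (hσ : σ ∈ gapExceeds S j k i) : successCount S σ (k + i) = j := by
  obtain ⟨hk, hle⟩ := (mem_filter.mp hσ).2
  refine le_antisymm hle ((le_successCount_waitTime S σ hj).trans (successCount_mono S σ ?_))
  omega

lemma mul_swap_mem_gapExceeds (hj : j ≤ #S) {i : ℕ} {σ : Perm (Fin N)}
    (hσ : σ ∈ gapExceeds S j k i) {q r : Fin N} (hq : (q : ℕ) = k + i) (hr : k + i ≤ r) :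
    σ * swap q r ∈ gapExceeds S j k i := by
  obtain ⟨hk, hle⟩ := (mem_filter.mp hσ).2
  have heq : ∀ x : Fin N, (x : ℕ) < k + i → (σ * swap q r) x = σ x := fun x hx => by
    rw [Perm.mul_apply, swap_apply_of_ne_of_ne (by omega) (by omega)]
  refine mem_filter.mpr ⟨mem_univ _, ?_, ?_⟩
  · rw [waitTime_eq_of_eqOn S hj (by omega) heq, hk]
  · rwa [successCount_congr S heq]

lemma gapExceeds_succ_subset (hj : j ≤ #S) {i : ℕ} (hq : k + i < N) :
    gapExceeds S j k (i + 1) ⊆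
      (gapExceeds S j k i).filter fun σ => σ ⟨k + i, hq⟩ ∉ S := by
  intro σ hσ
  obtain ⟨hk, hle⟩ := (mem_filter.mp hσ).2
  rw [← add_assoc] at hle
  have hσi : σ ∈ gapExceeds S j k i :=
    mem_filter.mpr ⟨mem_univ _, hk, (successCount_mono S σ (by omega)).trans hle⟩
  refine mem_filter.mpr ⟨hσi, fun hS => ?_⟩
  have := successCount_succ_of_mem S σ hq hS
  rw [successCount_eq_of_mem_gapExceeds S hj hσi] at this
  omega

lemma card_gapExceeds_mul_le_card_filter_mul (hj : j ≤ #S) {i : ℕ} (hq : k + i < N) :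
    #(gapExceeds S j k i) * (#S - j) ≤
      #((gapExceeds S j k i).filter fun σ => σ ⟨k + i, hq⟩ ∈ S) * N := by
  set A := gapExceeds S j k i
  set q : Fin N := ⟨k + i, hq⟩
  let pairs := A.sigma fun σ => ({r | k + i ≤ (r : ℕ) ∧ σ r ∈ S} : Finset (Fin N))
  have hpairs : #A * (#S - j) ≤ #pairs := by
    rw [card_sigma, ← smul_eq_mul (α := ℕ)]
    refine card_nsmul_le_sum A (fun σ => #{r : Fin N | k + i ≤ (r : ℕ) ∧ σ r ∈ S}) _
      fun σ hσ => ?_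
    have := card_filter_le_and_mem_add_successCount S σ (k + i)
    rw [successCount_eq_of_mem_gapExceeds S hj hσ] at this
    omega
  have hinj : #pairs ≤ #(A.filter (fun σ => σ q ∈ S) ×ˢ (univ : Finset (Fin N))) := by
    refine card_le_card_of_injOn (fun p => (p.1 * swap q p.2, p.2)) ?_ ?_
    · rintro ⟨σ, r⟩ hp
      obtain ⟨hσ, hr⟩ := mem_sigma.mp hp
      obtain ⟨hr, hrS⟩ := (mem_filter.mp hr).2
      simp only [coe_product, Set.mem_prod, mem_coe, mem_filter, mem_univ, and_true]
      exact ⟨mul_swap_mem_gapExceeds S hj hσ rfl hr, by simpa using hrS⟩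
    · rintro ⟨σ, r⟩ _ ⟨σ', r'⟩ _ h
      simp only [Prod.mk.injEq] at h
      obtain ⟨hσ, rfl⟩ := h
      rw [mul_right_cancel hσ]
  rw [card_product, card_univ, Fintype.card_fin] at hinj
  exact hpairs.trans hinj

lemma card_gapExceeds_succ_mul_le (hj : j < #S) (i : ℕ) :
    #(gapExceeds S j k (i + 1)) * N ≤ #(gapExceeds S j k i) * (N - (#S - j)) := by
  by_cases hq : k + i < N
  · have hsplit := card_filter_add_card_filter_not (s := gapExceeds S j k i)
      (fun σ => σ ⟨k + i, hq⟩ ∈ S)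
    have hsub := card_le_card (gapExceeds_succ_subset S hj.le hq)
    have hswap := card_gapExceeds_mul_le_card_filter_mul S hj.le hq
    rw [Nat.mul_sub]
    apply Nat.le_sub_of_add_le
    nlinarith [Nat.mul_le_mul_right N hsub]
  · simp [gapExceeds_eq_empty S hj (by omega : N ≤ k + (i + 1))]

lemma card_gapExceeds_le (hj : j < #S) (i : ℕ) :
    (#(gapExceeds S j k i) : ℝ≥0∞) ≤
      #(gapExceeds S j k 0) * (((N - (#S - j) : ℕ) : ℝ≥0∞) / N) ^ i := by
  induction i with
  | zero => simp
  | succ i ih =>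
    have hN : (N : ℝ≥0∞) ≠ 0 := by
      have := S.card_le_univ
      rw [Fintype.card_fin] at this
      exact_mod_cast (show N ≠ 0 by omega)
    have hstep : (#(gapExceeds S j k (i + 1)) : ℝ≥0∞) ≤
        #(gapExceeds S j k i) * (((N - (#S - j) : ℕ) : ℝ≥0∞) / N) := by
      rw [← mul_div_assoc, ENNReal.le_div_iff_mul_le (.inl hN) (.inl (ENNReal.natCast_ne_top N))]
      exact_mod_cast card_gapExceeds_succ_mul_le S hj i
    calc _ ≤ _ := hstep
      _ ≤ _ := by rw [pow_succ, ← mul_assoc]; gcongr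

theorem card_waitTime_gap_div_card_le (hj : j < #S) (m : ℕ) :
    (#({σ | waitTime S σ j = k ∧ m ≤ waitTime S σ (j + 1) - waitTime S σ j} : Finset _) :
        ℝ≥0∞) / #({σ | waitTime S σ j = k} : Finset _) ≤
      (((N - (#S - j) : ℕ) : ℝ≥0∞) / N) ^ (m - 1) := by
  refine ENNReal.div_le_of_le_mul ?_
  calc _ ≤ (#(gapExceeds S j k (m - 1)) : ℝ≥0∞) := by
        exact_mod_cast card_le_card (inter_subset_gapExceeds S m)
    _ ≤ _ := card_gapExceeds_le S hj _
    _ ≤ _ := by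
        rw [mul_comm]
        gcongr
        exact gapExceeds_zero_subset S

end Gap

section UniformPreimage

variable {Ω ι : Type*} [MeasurableSpace Ω] [Fintype ι] {P : Measure Ω} {f : Ω → ι}

lemma measure_preimage_finset_le (hf : ∀ i, P {ω | f ω = i} = 1 / Fintype.card ι)
    (G : Finset ι) : P (f ⁻¹' G) ≤ #G / Fintype.card ι :=
  calc P (f ⁻¹' G) = P (⋃ i ∈ G, {ω | f ω = i}) := by congr 1; ext; simp
    _ ≤ ∑ i ∈ G, P {ω | f ω = i} := measure_biUnion_finset_le _ _
    _ = #G / Fintype.card ι := by simp [hf, div_eq_mul_inv]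

lemma measure_preimage_finset [IsProbabilityMeasure P]
    (hf : ∀ i, P {ω | f ω = i} = 1 / Fintype.card ι) (G : Finset ι) :
    P (f ⁻¹' G) = #G / Fintype.card ι := by
  classical
  refine le_antisymm (measure_preimage_finset_le hf G) ?_
  have hcover : 1 ≤ P (f ⁻¹' G) + #Gᶜ / Fintype.card ι :=
    calc 1 = P (f ⁻¹' G ∪ f ⁻¹' ↑Gᶜ) := by
          rw [coe_compl, Set.preimage_compl, Set.union_compl_self, measure_univ]
      _ ≤ P (f ⁻¹' G) + P (f ⁻¹' ↑Gᶜ) := measure_union_le _ _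
      _ ≤ _ := by gcongr; exact measure_preimage_finset_le hf _
  have : Nonempty ι := (nonempty_of_isProbabilityMeasure P).map f
  have htotal : #G / Fintype.card ι + #Gᶜ / Fintype.card ι = (1 : ℝ≥0∞) := by
    rw [ENNReal.div_add_div_same, ← Nat.cast_add, card_add_card_compl,
      ENNReal.div_self (by simp) (by simp)]
  rw [ENNReal.eq_sub_of_add_eq (ENNReal.div_ne_top (ENNReal.natCast_ne_top _) (by simp)) htotal]
  exact tsub_le_iff_right.mpr hcover

lemma cond_preimage_le [DecidableEq ι] [IsProbabilityMeasure P]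
    (hf : ∀ i, P {ω | f ω = i} = 1 / Fintype.card ι) (E F : Finset ι) :
    P[f ⁻¹' F | f ⁻¹' E] ≤ #(E ∩ F) / #E := by
  have : Nonempty ι := (nonempty_of_isProbabilityMeasure P).map f
  set c : ℝ≥0∞ := (Fintype.card ι : ℝ≥0∞)
  have hc0 : c ≠ 0 := by simp [c]
  have hctop : c ≠ ∞ := ENNReal.natCast_ne_top _
  set TE := toMeasurable P (f ⁻¹' E)
  set TF := toMeasurable P (f ⁻¹' F)
  have hinter : P (TE ∩ TF) ≤ #(E ∩ F) / c := by
    have hunion : P (f ⁻¹' ↑(E ∪ F)) ≤ P (TE ∪ TF) := measure_mono <| by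
      rw [coe_union, Set.preimage_union]
      exact Set.union_subset_union (subset_toMeasurable _ _) (subset_toMeasurable _ _)
    have hadd := measure_union_add_inter (μ := P) TE (measurableSet_toMeasurable P (f ⁻¹' F))
    rw [measure_toMeasurable, measure_toMeasurable, measure_preimage_finset hf,
      measure_preimage_finset hf] at hadd
    rw [measure_preimage_finset hf] at hunion
    refine (ENNReal.add_le_add_iff_left
      (ENNReal.div_ne_top (ENNReal.natCast_ne_top #(E ∪ F)) hc0)).mp ?_
    calc #(E ∪ F) / c + P (TE ∩ TF) ≤ P (TE ∪ TF) + P (TE ∩ TF) := by gcongr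
      _ = #E / c + #F / c := hadd
      _ = #(E ∪ F) / c + #(E ∩ F) / c := by
        rw [ENNReal.div_add_div_same, ENNReal.div_add_div_same, ← Nat.cast_add, ← Nat.cast_add,
          card_union_add_card_inter]
  calc P[f ⁻¹' F | f ⁻¹' E]
        = (P (f ⁻¹' E))⁻¹ * P.restrict (f ⁻¹' E) (f ⁻¹' F) := rfl
    _ ≤ (#E / c)⁻¹ * P (TF ∩ TE) := by
        rw [measure_preimage_finset hf, ← Measure.restrict_apply (measurableSet_toMeasurable _ _)]
        gcongr <;> exact subset_toMeasurable _ _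
    _ ≤ (#E / c)⁻¹ * (#(E ∩ F) / c) := by rw [Set.inter_comm]; gcongr
    _ = #(E ∩ F) / #E := by
        rw [ENNReal.inv_div (.inl hctop) (.inl hc0), div_eq_mul_inv, div_eq_mul_inv,
          div_eq_mul_inv, mul_comm, mul_assoc, ← mul_assoc c⁻¹,
          ENNReal.inv_mul_cancel hc0 hctop, one_mul]

end UniformPreimage

lemma HasGeom.ofReal_pow_le_measure_le {Ω : Type*} [MeasurableSpace Ω] {Q : Measure Ω}
    [IsProbabilityMeasure Q] {Y : Ω → ℕ} {p : ℝ} (hY : HasGeom Q Y p) (hp0 : 0 ≤ p)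
    (hp1 : p ≤ 1) (m : ℕ) : ENNReal.ofReal ((1 - p) ^ (m - 1)) ≤ Q {ω | m ≤ Y ω} := by
  rcases m with _ | n
  · simp
  have hq0 : 0 ≤ 1 - p := by linarith
  have hqn : (1 - p) ^ n ≤ 1 := pow_le_one₀ hq0 (by linarith)
  have hhead : ∑ t ∈ range (n + 1), Q {ω | Y ω = t} = ENNReal.ofReal (1 - (1 - p) ^ n) := by
    rw [sum_range_succ', ← mul_neg_geom_sum, sub_sub_cancel, mul_sum,
      ENNReal.ofReal_sum_of_nonneg fun t _ => by positivity]
    simp [show ∀ t, Q {ω | Y ω = t} = _ from hY]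
  have hcover : 1 ≤ Q {ω | n + 1 ≤ Y ω} + ENNReal.ofReal (1 - (1 - p) ^ n) :=
    calc 1 = Q ({ω | n + 1 ≤ Y ω} ∪ ⋃ t ∈ range (n + 1), {ω | Y ω = t}) := by
          rw [← measure_univ (μ := Q)]
          congr 1
          ext ω
          simp only [Set.mem_univ, Set.mem_union, Set.mem_ofPred_eq, Set.mem_iUnion, mem_range,
            exists_prop, exists_eq_right', true_iff]
          omega
      _ ≤ _ := (measure_union_le _ _).trans <| by
          rw [← hhead]
          gcongr
          exact measure_biUnion_finset_le _ _
  have hsplit : ENNReal.ofReal ((1 - p) ^ n) + ENNReal.ofReal (1 - (1 - p) ^ n) = 1 := by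
    rw [← ENNReal.ofReal_add (by positivity) (by linarith), add_sub_cancel, ENNReal.ofReal_one]
  rw [Nat.add_sub_cancel, ENNReal.eq_sub_of_add_eq ENNReal.ofReal_ne_top hsplit]
  exact tsub_le_iff_right.mpr hcover

theorem negHyperGeom_increment_cond_stochDom_geom_general
    {Ω Ω' : Type*} [MeasurableSpace Ω] [MeasurableSpace Ω']
    (P : Measure Ω) (Q : Measure Ω') [IsProbabilityMeasure P] [IsProbabilityMeasure Q]
    (k₁ k₂ : ℕ) (S : Finset (Fin (k₁ + k₂))) (hS : S.card = k₁)
    (π : Ω → Equiv.Perm (Fin (k₁ + k₂)))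
    (hunif : ∀ σ : Equiv.Perm (Fin (k₁ + k₂)),
      P {ω | π ω = σ} = 1 / ((Nat.factorial (k₁ + k₂) : ℕ) : ENNReal))
    (j : ℕ) (hjk : j + 1 ≤ k₁)
    (Y : Ω' → ℕ)
    (hY : HasGeom Q Y (((k₁ : ℝ) - (j : ℝ)) / ((k₁ : ℝ) + (k₂ : ℝ)))) :
    ∀ (m : ℕ) (k : ℕ),
      (P[|{ω | waitTime S (π ω) j = k}])
          {ω | m ≤ waitTime S (π ω) (j + 1) - waitTime S (π ω) j}
        ≤ Q {ω | m ≤ Y ω} := by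
  intro m k
  have hπ : ∀ σ, P {ω | π ω = σ} = 1 / Fintype.card (Equiv.Perm (Fin (k₁ + k₂))) := by
    simpa [Fintype.card_perm] using hunif
  have hN : (0 : ℝ) < k₁ + k₂ := by
    have : (0 : ℝ) < k₁ := by exact_mod_cast (by omega : 0 < k₁)
    positivity
  have hj_le : (j : ℝ) ≤ k₁ := by exact_mod_cast (by omega : j ≤ k₁)
  have hp0 : 0 ≤ ((k₁ : ℝ) - j) / (k₁ + k₂) := div_nonneg (by linarith) hN.le
  have hp1 : ((k₁ : ℝ) - j) / (k₁ + k₂) ≤ 1 :=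
    (div_le_one hN).mpr (by linarith [k₂.cast_nonneg (α := ℝ), j.cast_nonneg (α := ℝ)])
  have hq : 1 - ((k₁ : ℝ) - j) / (k₁ + k₂) = (k₂ + j : ℕ) / (k₁ + k₂ : ℕ) := by
    push_cast
    field_simp
    ring
  have hE : {ω | waitTime S (π ω) j = k} =
      π ⁻¹' ↑({σ | waitTime S σ j = k} : Finset _) := by
    ext; simp
  have hF : {ω | m ≤ waitTime S (π ω) (j + 1) - waitTime S (π ω) j} =
      π ⁻¹' ↑({σ | m ≤ waitTime S σ (j + 1) - waitTime S σ j} : Finset _) := by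
    ext; simp
  rw [hE, hF]
  calc _ ≤ _ := cond_preimage_le hπ _ _
    _ ≤ (((k₂ + j : ℕ) : ℝ≥0∞) / (k₁ + k₂ : ℕ)) ^ (m - 1) := by
        rw [← filter_and, show k₂ + j = k₁ + k₂ - (#S - j) by omega]
        exact card_waitTime_gap_div_card_le S (by omega) m
    _ = ENNReal.ofReal ((1 - ((k₁ : ℝ) - j) / (k₁ + k₂)) ^ (m - 1)) := by
        rw [ENNReal.ofReal_pow (by linarith), hq,
          ENNReal.ofReal_div_of_pos (by exact_mod_cast hN), ENNReal.ofReal_natCast,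
          ENNReal.ofReal_natCast]
    _ ≤ Q {ω | m ≤ Y ω} := hY.ofReal_pow_le_measure_le hp0 hp1 m

/-- Sampling without replacement from a population of size `k₁+k₂`
with `k₁` successes is modeled by a uniformly random permutation `π` of `Fin (k₁+k₂)`
and a success set `S` of size `k₁`; `X_j = waitTime S π j` is the number of draws until
the `j`-th success. For `1 ≤ j ≤ k₁ - 1`, the conditional law of `X_{j+1} - X_j` given
`X_j = k` is stochastically smaller than `Geo(k₁/(k₁+k₂) - j/(k₁+k₂))`: for every `m`
and every admissible `k`, `P(X_{j+1} - X_j ≥ m | X_j = k) ≤ P(Geo((k₁-j)/(k₁+k₂)) ≥ m)`. -/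
theorem negHyperGeom_increment_cond_stochDom_geom
    {Ω Ω' : Type*} [MeasurableSpace Ω] [MeasurableSpace Ω']
    (P : Measure Ω) (Q : Measure Ω') [IsProbabilityMeasure P] [IsProbabilityMeasure Q]
    (k₁ k₂ : ℕ) (S : Finset (Fin (k₁ + k₂))) (hS : S.card = k₁)
    (π : Ω → Equiv.Perm (Fin (k₁ + k₂)))
    (hunif : ∀ σ : Equiv.Perm (Fin (k₁ + k₂)),
      P {ω | π ω = σ} = 1 / ((Nat.factorial (k₁ + k₂) : ℕ) : ENNReal))
    (j : ℕ) (hj : 1 ≤ j) (hjk : j + 1 ≤ k₁)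
    (Y : Ω' → ℕ)
    (hY : HasGeom Q Y (((k₁ : ℝ) - (j : ℝ)) / ((k₁ : ℝ) + (k₂ : ℝ)))) :
    ∀ (m : ℕ) (k : ℕ),
      (P[|{ω | waitTime S (π ω) j = k}])
          {ω | m ≤ waitTime S (π ω) (j + 1) - waitTime S (π ω) j}
        ≤ Q {ω | m ≤ Y ω} :=
  negHyperGeom_increment_cond_stochDom_geom_general P Q k₁ k₂ S hS π hunif j hjk Y hY

end RumorSpreading
end

section
/- Let X_1, ..., X_j and Y_1, ..., Y_j be real-valued random variables, set X_0 ≡ 0, and assume that for each i = 0, ..., j−1 the conditional law of X_{i+1} − X_i given X_i is stochastically smaller than the law of Y_{i+1} (almost surely). Then X_j ≼ Ỹ_1 + ... + Ỹ_j, where Ỹ_1, ..., Ỹ_j are mutually independent random variables with Ỹ_i distributed as Y_i for each i. -/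
/-!
Write `X (i+1) = X i + D i`. Disintegrating the joint law of `(X i, D i)` along the conditional
law `κ` of `D i` given `X i` gives `P(X (i+1) ≥ t) = ∫ κ x [t - x, ∞) d(law X i)(x)`, and bounding
`κ x` by the law `ν` of `Y (i+1)` inside the integral shows that `X (i+1)` is stochastically
smaller than `law (X i) ∗ ν`. Convolution with a fixed measure preserves the stochastic order
(the same pointwise bound, after commuting the factors), so by induction `X j` is dominated by
the convolution of the laws of the `Y i`, which is the law of the independent sum.
-/

open MeasureTheory ProbabilityTheory Set

namespace RumorSpreading

def StochDom (μ ν : Measure ℝ) : Prop :=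
  ∀ t, μ (Ici t) ≤ ν (Ici t)

lemma StochDom.refl (μ : Measure ℝ) : StochDom μ μ :=
  fun _ => le_rfl

lemma StochDom.trans {μ ν ρ : Measure ℝ} (h₁ : StochDom μ ν) (h₂ : StochDom ν ρ) :
    StochDom μ ρ :=
  fun t => (h₁ t).trans (h₂ t)

lemma map_add_compProd_apply_Ici (μ : Measure ℝ) (κ : Kernel ℝ ℝ) [SFinite μ]
    [IsSFiniteKernel κ] (t : ℝ) :
    (μ ⊗ₘ κ).map (fun p => p.1 + p.2) (Ici t) = ∫⁻ x, κ x (Ici (t - x)) ∂μ := by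
  rw [Measure.map_apply (by fun_prop) measurableSet_Ici,
    Measure.compProd_apply (measurableSet_Ici.preimage (by fun_prop))]
  congr! with x
  ext y
  simp [add_comm]

lemma stochDom_map_add_compProd {μ : Measure ℝ} {κ η : Kernel ℝ ℝ} [SFinite μ]
    [IsSFiniteKernel κ] [IsSFiniteKernel η] (h : ∀ᵐ x ∂μ, StochDom (κ x) (η x)) :
    StochDom ((μ ⊗ₘ κ).map (fun p => p.1 + p.2)) ((μ ⊗ₘ η).map (fun p => p.1 + p.2)) := by
  intro t
  simp_rw [map_add_compProd_apply_Ici]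
  exact lintegral_mono_ae (h.mono fun x hx => hx _)

lemma conv_eq_map_add_compProd_const (μ ν : Measure ℝ) [SFinite μ] [SFinite ν] :
    μ ∗ ν = (μ ⊗ₘ Kernel.const ℝ ν).map (fun p => p.1 + p.2) := by
  rw [Measure.compProd_const]
  rfl

lemma StochDom.conv_left {μ μ' : Measure ℝ} (ν : Measure ℝ) [SFinite μ] [SFinite μ']
    [SFinite ν] (h : StochDom μ μ') : StochDom (μ ∗ ν) (μ' ∗ ν) := by
  rw [Measure.conv_comm μ, Measure.conv_comm μ', conv_eq_map_add_compProd_const,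
    conv_eq_map_add_compProd_const]
  exact stochDom_map_add_compProd (ae_of_all _ fun _ => h)

lemma map_add_eq_map_add_compProd_condDistrib {Ω : Type*} [MeasurableSpace Ω]
    {P : Measure Ω} [IsFiniteMeasure P] {X D : Ω → ℝ} (hX : Measurable X) (hD : Measurable D) :
    P.map (fun ω => X ω + D ω) = (P.map X ⊗ₘ condDistrib D X P).map (fun p => p.1 + p.2) := by
  rw [compProd_map_condDistrib hD.aemeasurable, Measure.map_map (by fun_prop) (hX.prodMk hD)]
  rfl

lemma StochDom.map_add_of_condDistrib {Ω Ω' : Type*} [MeasurableSpace Ω] [MeasurableSpace Ω']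
    {P : Measure Ω} {R : Measure Ω'} [IsFiniteMeasure P] [IsFiniteMeasure R]
    {X D : Ω → ℝ} {W Z : Ω' → ℝ} (hX : Measurable X) (hD : Measurable D)
    (hW : Measurable W) (hZ : Measurable Z) (hXW : StochDom (P.map X) (R.map W))
    (hDZ : ∀ᵐ x ∂(P.map X), StochDom (condDistrib D X P x) (R.map Z)) (hWZ : IndepFun W Z R) :
    StochDom (P.map (fun ω => X ω + D ω)) (R.map (fun ω => W ω + Z ω)) := by
  rw [map_add_eq_map_add_compProd_condDistrib hX hD]
  have hWZ_law : R.map (fun ω => W ω + Z ω) = R.map W ∗ R.map Z :=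
    hWZ.map_add_eq_map_conv_map hW hZ
  refine (stochDom_map_add_compProd (η := Kernel.const ℝ (R.map Z)) ?_).trans ?_
  · simpa using hDZ
  · rw [← conv_eq_map_add_compProd_const, hWZ_law]
    exact hXW.conv_left _

theorem stochDom_map_sum_of_condDistrib {Ω Ω' : Type*} [MeasurableSpace Ω] [MeasurableSpace Ω']
    {P : Measure Ω} {R : Measure Ω'} [IsProbabilityMeasure P] [IsProbabilityMeasure R]
    {X : ℕ → Ω → ℝ} (hX0 : ∀ ω, X 0 ω = 0) (hX : ∀ i, Measurable (X i)) :
    ∀ (j : ℕ) (Z : Fin j → Ω' → ℝ), (∀ i, Measurable (Z i)) → iIndepFun Z R →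
      (∀ i : Fin j, ∀ᵐ x ∂(P.map (X i)),
        StochDom (condDistrib (fun ω => X (i + 1 : ℕ) ω - X i ω) (X i) P x) (R.map (Z i))) →
      StochDom (P.map (X j)) (R.map (fun ω => ∑ i, Z i ω))
  | 0, Z, _, _, _ => by
    simp only [Finset.univ_eq_empty, Finset.sum_empty, funext hX0, Measure.map_const,
      measure_univ, one_smul]
    exact StochDom.refl _
  | j + 1, Z, hZ, hindep, hstep => by
    have hZ_castSucc : iIndepFun (fun i : Fin j => Z i.castSucc) R :=
      hindep.precomp (Fin.castSucc_injective j)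
    have hprev := stochDom_map_sum_of_condDistrib hX0 hX j (fun i => Z i.castSucc)
      (fun i => hZ _) hZ_castSucc (fun i => hstep i.castSucc)
    have hindep_last :
        IndepFun (fun ω => ∑ i : Fin j, Z i.castSucc ω) (Z (Fin.last j)) R := by
      have hlast : Fin.last j ∉ Finset.univ.map Fin.castSuccEmb := by simp
      simpa [Finset.sum_fn] using hindep.indepFun_finsetSum_of_notMem hZ hlast
    have hX_succ : X (j + 1) = fun ω => X j ω + (X (j + 1) ω - X j ω) := by
      ext ω; ring
    simp_rw [Fin.sum_univ_castSucc (fun i => Z i _)]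
    rw [hX_succ]
    exact hprev.map_add_of_condDistrib (hX j) ((hX _).sub (hX j))
      (by fun_prop) (hZ _) (hstep (Fin.last j)) hindep_last

theorem stochDom_of_cond_increments_general
    {Ω Ω' : Type*} [MeasurableSpace Ω] [MeasurableSpace Ω']
    (P : Measure Ω) (Q : Measure Ω') [IsProbabilityMeasure P]
    (j : ℕ) (X : ℕ → Ω → ℝ) (Y : ℕ → Ω' → ℝ)
    (hX0 : ∀ ω, X 0 ω = 0)
    (hXm : ∀ i, Measurable (X i)) (hYm : ∀ i, Measurable (Y i))
    (hcond : ∀ i < j, ∀ᵐ x ∂(P.map (X i)), ∀ t : ℝ,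
      (condDistrib (fun ω => X (i + 1) ω - X i ω) (X i) P) x {y | t ≤ y}
        ≤ Q {ω | t ≤ Y (i + 1) ω})
    {Ω'' : Type*} [MeasurableSpace Ω''] (R : Measure Ω'') [IsProbabilityMeasure R]
    (Z : Fin j → Ω'' → ℝ) (hZm : ∀ i, Measurable (Z i))
    (hZindep : iIndepFun Z R)
    (hZlaw : ∀ i : Fin j, R.map (Z i) = Q.map (Y ((i : ℕ) + 1))) :
    ∀ t : ℝ, P {ω | t ≤ X j ω} ≤ R {ω | t ≤ ∑ i : Fin j, Z i ω} := by
  have hstep : ∀ i : Fin j, ∀ᵐ x ∂(P.map (X i)),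
      StochDom (condDistrib (fun ω => X (i + 1 : ℕ) ω - X i ω) (X i) P x) (R.map (Z i)) := by
    intro i
    filter_upwards [hcond i i.isLt] with x hx t
    rw [hZlaw, Measure.map_apply (hYm _) measurableSet_Ici]
    exact hx t
  intro t
  have hlaw := stochDom_map_sum_of_condDistrib hX0 hXm j Z hZm hZindep hstep t
  rwa [Measure.map_apply (hXm j) measurableSet_Ici,
    Measure.map_apply (by fun_prop) measurableSet_Ici] at hlaw

/-- Let `X 0, X 1, ..., X j` and `Y 1, ..., Y j` be real-valued random
variables with `X 0 ≡ 0`, and assume that for each `i = 0, ..., j-1` the (regular)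
conditional law of `X (i+1) - X i` given `X i` is stochastically smaller than the law of
`Y (i+1)`, almost surely. Then `X j ≼ Z 1 + ... + Z j` for any mutually independent
random variables `Z i` with `Z i` distributed as `Y (i+1)`. -/
theorem stochDom_of_cond_increments
    {Ω Ω' : Type*} [MeasurableSpace Ω] [MeasurableSpace Ω']
    (P : Measure Ω) (Q : Measure Ω') [IsProbabilityMeasure P] [IsProbabilityMeasure Q]
    (j : ℕ) (X : ℕ → Ω → ℝ) (Y : ℕ → Ω' → ℝ)
    (hX0 : ∀ ω, X 0 ω = 0)
    (hXm : ∀ i, Measurable (X i)) (hYm : ∀ i, Measurable (Y i))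
    (hcond : ∀ i < j, ∀ᵐ x ∂(P.map (X i)), ∀ t : ℝ,
      (condDistrib (fun ω => X (i + 1) ω - X i ω) (X i) P) x {y | t ≤ y}
        ≤ Q {ω | t ≤ Y (i + 1) ω})
    {Ω'' : Type*} [MeasurableSpace Ω''] (R : Measure Ω'') [IsProbabilityMeasure R]
    (Z : Fin j → Ω'' → ℝ) (hZm : ∀ i, Measurable (Z i))
    (hZindep : iIndepFun Z R)
    (hZlaw : ∀ i : Fin j, R.map (Z i) = Q.map (Y ((i : ℕ) + 1))) :
    ∀ t : ℝ, P {ω | t ≤ X j ω} ≤ R {ω | t ≤ ∑ i : Fin j, Z i ω} :=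
  stochDom_of_cond_increments_general P Q j X Y hX0 hXm hYm hcond R Z hZm hZindep hZlaw

end RumorSpreading
end

section
/- Let p ∈ (0,1] and a ∈ [0,1]. Let A ~ Bernoulli(p) and let I_1, I_2 ~ Bernoulli(a) with A, I_1, I_2 mutually independent, and set S_1 = A·I_1 + A·I_2. Let q = p·a·(1 − a/2) and let B_1, B_2 be independent Bernoulli(q) random variables, S_2 = B_1 + B_2. Then S_2 ≼ S_1, i.e., P(S_2 ≥ 1) ≤ P(S_1 ≥ 1) and P(S_2 ≥ 2) ≤ P(S_1 ≥ 2). -/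
/-!
On both sides only the tails at `1` and `2` matter, since the sums take values in `{0, 1, 2}`
almost surely. At `1`, the union bound gives `P(S₂ ≥ 1) ≤ 2q`, while
`P(S₁ = 0) ≤ 1 - p + p(1 - a)² = 1 - 2q`. At `2`, `P(S₂ ≥ 2) = q²` and
`P(S₁ ≥ 2) ≥ p a²`, and `q² = p a² · p(1 - a/2)² ≤ p a²`.
-/

open MeasureTheory ProbabilityTheory

namespace RumorSpreading

/-- `X` is a Bernoulli random variable with parameter `p`: it takes the value `1`
with probability `p` and the value `0` with probability `1 - p`. -/
def HasBernoulli {Ω : Type*} [MeasurableSpace Ω] (P : Measure Ω) (X : Ω → ℕ) (p : ℝ) : Prop :=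
  ∀ k : ℕ, P {ω | X ω = k} =
    if k = 0 then ENNReal.ofReal (1 - p) else if k = 1 then ENNReal.ofReal p else 0

lemma measure_le_natCast_le_of_forall {Ω Ω' : Type*} [MeasurableSpace Ω] [MeasurableSpace Ω']
    (P : Measure Ω) (Q : Measure Ω') (X : Ω' → ℕ) (Y : Ω → ℕ)
    (h : ∀ k : ℕ, Q {ω | k ≤ X ω} ≤ P {ω | k ≤ Y ω}) (t : ℝ) :
    Q {ω | t ≤ (X ω : ℝ)} ≤ P {ω | t ≤ (Y ω : ℝ)} := by
  simp_rw [← Nat.ceil_le]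
  exact h _

section Bernoulli

variable {Ω : Type*} [MeasurableSpace Ω] {P : Measure Ω} {X Y : Ω → ℕ} {p r : ℝ}

lemma HasBernoulli.measure_eq_zero (h : HasBernoulli P X p) :
    P {ω | X ω = 0} = ENNReal.ofReal (1 - p) := by
  simpa using h 0

lemma HasBernoulli.measure_eq_one (h : HasBernoulli P X p) :
    P {ω | X ω = 1} = ENNReal.ofReal p := by
  simpa using h 1

lemma HasBernoulli.ae_le_one (h : HasBernoulli P X p) : ∀ᵐ ω ∂P, X ω ≤ 1 := by
  have hset : {ω | ¬X ω ≤ 1} = ⋃ k : ℕ, {ω | X ω = k + 2} := by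
    ext ω
    simp only [Set.mem_ofPred_eq, Set.mem_iUnion]
    exact ⟨fun hX => ⟨X ω - 2, by omega⟩, by rintro ⟨k, hk⟩; omega⟩
  rw [ae_iff, hset, measure_iUnion_null_iff]
  intro k
  simpa using h (k + 2)

lemma HasBernoulli.measure_one_le (h : HasBernoulli P X p) :
    P {ω | 1 ≤ X ω} = ENNReal.ofReal p := by
  rw [← h.measure_eq_one]
  refine measure_congr ?_
  filter_upwards [h.ae_le_one] with ω hω
  exact propext (show 1 ≤ X ω ↔ X ω = 1 by omega)

lemma HasBernoulli.measure_one_le_add (hX : HasBernoulli P X p) (hY : HasBernoulli P Y r) :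
    P {ω | 1 ≤ X ω + Y ω} ≤ ENNReal.ofReal p + ENNReal.ofReal r :=
  calc P {ω | 1 ≤ X ω + Y ω}
      ≤ P ({ω | 1 ≤ X ω} ∪ {ω | 1 ≤ Y ω}) := measure_mono fun ω hω => by
        simp only [Set.mem_union, Set.mem_ofPred_eq] at hω ⊢
        omega
    _ ≤ P {ω | 1 ≤ X ω} + P {ω | 1 ≤ Y ω} := measure_union_le _ _
    _ = ENNReal.ofReal p + ENNReal.ofReal r := by rw [hX.measure_one_le, hY.measure_one_le]

lemma HasBernoulli.measure_two_le_add (hX : HasBernoulli P X p) (hY : HasBernoulli P Y r)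
    (hind : ∀ x y : ℕ, P {ω | X ω = x ∧ Y ω = y} = P {ω | X ω = x} * P {ω | Y ω = y}) :
    P {ω | 2 ≤ X ω + Y ω} = ENNReal.ofReal p * ENNReal.ofReal r := by
  rw [← hX.measure_eq_one, ← hY.measure_eq_one, ← hind]
  refine measure_congr ?_
  filter_upwards [hX.ae_le_one, hY.ae_le_one] with ω hXω hYω
  exact propext (show 2 ≤ X ω + Y ω ↔ X ω = 1 ∧ Y ω = 1 by omega)

lemma HasBernoulli.measure_three_le_add (hX : HasBernoulli P X p) (hY : HasBernoulli P Y r) :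
    P {ω | 3 ≤ X ω + Y ω} = 0 := by
  rw [measure_eq_zero_iff_ae_notMem]
  filter_upwards [hX.ae_le_one, hY.ae_le_one] with ω hXω hYω
  omega

section Product

variable {A I₁ I₂ : Ω → ℕ} {a : ℝ}

lemma HasBernoulli.measure_mul_add_mul_eq_zero_le (hA : HasBernoulli P A p)
    (hI₁ : HasBernoulli P I₁ a) (hI₂ : HasBernoulli P I₂ a)
    (hind : ∀ x y z : ℕ, P {ω | A ω = x ∧ I₁ ω = y ∧ I₂ ω = z}
      = P {ω | A ω = x} * P {ω | I₁ ω = y} * P {ω | I₂ ω = z}) :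
    P {ω | A ω * I₁ ω + A ω * I₂ ω = 0} ≤
      ENNReal.ofReal (1 - p) + ENNReal.ofReal p * ENNReal.ofReal (1 - a) * ENNReal.ofReal (1 - a) :=
  calc P {ω | A ω * I₁ ω + A ω * I₂ ω = 0}
      ≤ P ({ω | A ω = 0} ∪ {ω | A ω = 1 ∧ I₁ ω = 0 ∧ I₂ ω = 0}) := by
        refine measure_mono_ae ?_
        filter_upwards [hA.ae_le_one] with ω hAω (hω : A ω * I₁ ω + A ω * I₂ ω = 0)
        show A ω = 0 ∨ A ω = 1 ∧ I₁ ω = 0 ∧ I₂ ω = 0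
        interval_cases A ω <;> omega
    _ ≤ _ := by
        grw [measure_union_le, hind, hA.measure_eq_zero, hA.measure_eq_one, hI₁.measure_eq_zero,
          hI₂.measure_eq_zero]

lemma HasBernoulli.ofReal_le_measure_one_le_mul_add_mul [IsProbabilityMeasure P]
    (hp0 : 0 ≤ p) (hp1 : p ≤ 1) (ha1 : a ≤ 1) (hA : HasBernoulli P A p)
    (hI₁ : HasBernoulli P I₁ a) (hI₂ : HasBernoulli P I₂ a)
    (hind : ∀ x y z : ℕ, P {ω | A ω = x ∧ I₁ ω = y ∧ I₂ ω = z}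
      = P {ω | A ω = x} * P {ω | I₁ ω = y} * P {ω | I₂ ω = z}) :
    ENNReal.ofReal (p * (1 - (1 - a) ^ 2)) ≤ P {ω | 1 ≤ A ω * I₁ ω + A ω * I₂ ω} := by
  have hzero :
      P {ω | A ω * I₁ ω + A ω * I₂ ω = 0} ≤ ENNReal.ofReal (1 - p * (1 - (1 - a) ^ 2)) := by
    grw [hA.measure_mul_add_mul_eq_zero_le hI₁ hI₂ hind, ← ENNReal.ofReal_mul hp0,
      ← ENNReal.ofReal_mul (by positivity), ← ENNReal.ofReal_add (by linarith) (by positivity)]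
    exact ENNReal.ofReal_le_ofReal (by linarith)
  have hcompl : {ω | A ω * I₁ ω + A ω * I₂ ω = 0}ᶜ = {ω | 1 ≤ A ω * I₁ ω + A ω * I₂ ω} := by
    ext ω
    simp [Nat.one_le_iff_ne_zero]
  calc ENNReal.ofReal (p * (1 - (1 - a) ^ 2))
      = 1 - ENNReal.ofReal (1 - p * (1 - (1 - a) ^ 2)) := by
        rw [← ENNReal.ofReal_one, ← ENNReal.ofReal_sub _ (by nlinarith), sub_sub_cancel]
    _ ≤ 1 - P {ω | A ω * I₁ ω + A ω * I₂ ω = 0} := by gcongr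
    _ ≤ P {ω | 1 ≤ A ω * I₁ ω + A ω * I₂ ω} := by
        -- the events need not be measurable: only subadditivity over a set and its complement
        rw [tsub_le_iff_right, ← hcompl, add_comm, ← measure_univ (μ := P)]
        exact measure_univ_le_add_compl _

lemma HasBernoulli.ofReal_mul_le_measure_two_le_mul_add_mul (hA : HasBernoulli P A p)
    (hI₁ : HasBernoulli P I₁ a) (hI₂ : HasBernoulli P I₂ a)
    (hind : ∀ x y z : ℕ, P {ω | A ω = x ∧ I₁ ω = y ∧ I₂ ω = z}
      = P {ω | A ω = x} * P {ω | I₁ ω = y} * P {ω | I₂ ω = z}) :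
    ENNReal.ofReal p * ENNReal.ofReal a * ENNReal.ofReal a
      ≤ P {ω | 2 ≤ A ω * I₁ ω + A ω * I₂ ω} := by
  calc ENNReal.ofReal p * ENNReal.ofReal a * ENNReal.ofReal a
      = P {ω | A ω = 1 ∧ I₁ ω = 1 ∧ I₂ ω = 1} := by
        rw [hind, hA.measure_eq_one, hI₁.measure_eq_one, hI₂.measure_eq_one]
    _ ≤ P {ω | 2 ≤ A ω * I₁ ω + A ω * I₂ ω} := measure_mono fun ω ⟨hAω, hI₁ω, hI₂ω⟩ => by
        simp [hAω, hI₁ω, hI₂ω]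

end Product

end Bernoulli

lemma sq_mul_mul_one_sub_half_le {p a : ℝ} (hp0 : 0 ≤ p) (hp1 : p ≤ 1) (ha0 : 0 ≤ a)
    (ha1 : a ≤ 1) : (p * a * (1 - a / 2)) ^ 2 ≤ p * a * a := by
  have hfactor : p * (1 - a / 2) ^ 2 ≤ 1 := by
    nlinarith [pow_le_one₀ (by linarith : 0 ≤ 1 - a / 2) (by linarith : 1 - a / 2 ≤ 1) (n := 2)]
  calc (p * a * (1 - a / 2)) ^ 2 = p * a * a * (p * (1 - a / 2) ^ 2) := by ring
    _ ≤ p * a * a := mul_le_of_le_one_right (by positivity) hfactor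

/-- Let `p ∈ (0,1]`, `a ∈ [0,1]`, `A ~ Be(p)`, `I₁, I₂ ~ Be(a)` with
`A, I₁, I₂` mutually independent, and `S₁ = A·I₁ + A·I₂`. Let `q = p·a·(1 - a/2)` and
`B₁, B₂` independent `Be(q)`, `S₂ = B₁ + B₂`. Then `S₂ ≼ S₁`, i.e.
`P(S₂ ≥ t) ≤ P(S₁ ≥ t)` for all `t` (equivalently `P(S₂ ≥ 1) ≤ P(S₁ ≥ 1)` and
`P(S₂ ≥ 2) ≤ P(S₁ ≥ 2)`). -/
theorem bernoulli_pair_stochDom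
    {Ω Ω' : Type*} [MeasurableSpace Ω] [MeasurableSpace Ω']
    (P : Measure Ω) (Q : Measure Ω') [IsProbabilityMeasure P] [IsProbabilityMeasure Q]
    (p a : ℝ) (hp0 : 0 < p) (hp1 : p ≤ 1) (ha0 : 0 ≤ a) (ha1 : a ≤ 1)
    (A I₁ I₂ : Ω → ℕ)
    (hA : HasBernoulli P A p) (hI₁ : HasBernoulli P I₁ a) (hI₂ : HasBernoulli P I₂ a)
    (hind : ∀ x y z : ℕ,
      P {ω | A ω = x ∧ I₁ ω = y ∧ I₂ ω = z}
        = P {ω | A ω = x} * P {ω | I₁ ω = y} * P {ω | I₂ ω = z})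
    (B₁ B₂ : Ω' → ℕ)
    (hB₁ : HasBernoulli Q B₁ (p * a * (1 - a / 2)))
    (hB₂ : HasBernoulli Q B₂ (p * a * (1 - a / 2)))
    (hBind : ∀ x y : ℕ,
      Q {ω | B₁ ω = x ∧ B₂ ω = y} = Q {ω | B₁ ω = x} * Q {ω | B₂ ω = y}) :
    ∀ t : ℝ,
      Q {ω | t ≤ ((B₁ ω + B₂ ω : ℕ) : ℝ)}
        ≤ P {ω | t ≤ ((A ω * I₁ ω + A ω * I₂ ω : ℕ) : ℝ)} := by
  have hq0 : 0 ≤ p * a * (1 - a / 2) := by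
    have : 0 ≤ 1 - a / 2 := by linarith
    positivity
  refine measure_le_natCast_le_of_forall P Q _ _ fun k => ?_
  match k with
  | 0 => simp
  | 1 =>
    calc Q {ω | 1 ≤ B₁ ω + B₂ ω}
        ≤ ENNReal.ofReal (p * a * (1 - a / 2)) + ENNReal.ofReal (p * a * (1 - a / 2)) :=
          hB₁.measure_one_le_add hB₂
      _ = ENNReal.ofReal (p * (1 - (1 - a) ^ 2)) := by
        rw [← ENNReal.ofReal_add hq0 hq0]
        congr 1
        ring
      _ ≤ _ := hA.ofReal_le_measure_one_le_mul_add_mul hp0.le hp1 ha1 hI₁ hI₂ hind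
  | 2 =>
    calc Q {ω | 2 ≤ B₁ ω + B₂ ω}
        = ENNReal.ofReal ((p * a * (1 - a / 2)) ^ 2) := by
          rw [hB₁.measure_two_le_add hB₂ hBind, ← ENNReal.ofReal_mul hq0, sq]
      _ ≤ ENNReal.ofReal (p * a * a) :=
          ENNReal.ofReal_le_ofReal (sq_mul_mul_one_sub_half_le hp0.le hp1 ha0 ha1)
      _ = ENNReal.ofReal p * ENNReal.ofReal a * ENNReal.ofReal a := by
          rw [ENNReal.ofReal_mul (by positivity), ENNReal.ofReal_mul hp0.le]
      _ ≤ _ := hA.ofReal_mul_le_measure_two_le_mul_add_mul hI₁ hI₂ hind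
  | k + 3 =>
    calc Q {ω | k + 3 ≤ B₁ ω + B₂ ω}
        ≤ Q {ω | 3 ≤ B₁ ω + B₂ ω} := measure_mono fun ω (hω : k + 3 ≤ _) => by
          change 3 ≤ _; omega
      _ = 0 := hB₁.measure_three_le_add hB₂
      _ ≤ _ := zero_le

end RumorSpreading
end

section
/- Let r ≥ 1, let T ≥ r, d ≥ 1 with T < d, and let J_1, ..., J_r be positive integers with J_1 + ... + J_r ≤ T. For each i, let S_i = G^i_1 + ... + G^i_{J_i} where the G^i_k are independent geometric random variables with G^i_k having parameter 1 − (k−1)/d, all variables across different i being independent. Then S_1 + ... + S_r ≼ G'_1 + ... + G'_T, where G'_1, ..., G'_T are independent geometric random variables each with parameter 1 − T/d. -/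
/-!
Write `P(X₁ + ⋯ + Xₙ ≥ s)` for independent ℕ-valued `Xᵢ` through their mass functions alone.
Conditioning on one variable, and comparing expectations of a monotone function by Abel
summation, shows that this tail grows when some `Xᵢ` is replaced by a stochastically larger
variable, and when further independent variables are added. Each `G a` is geometric with
parameter `1 - k/d ≥ 1 - T/d`, hence stochastically smaller than `Geo(1 - T/d)`, and there are
`∑ J i ≤ T` of them.
-/

open MeasureTheory ProbabilityTheory
open scoped ENNReal

namespace RumorSpreading

/-- Only countable subadditivity is used, on `Y ⁻¹' A` and on its complement, so neither `Y` nor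
its fibres need to be measurable. -/
theorem measure_preimage_eq_tsum_indicator {Ω α : Type*} [MeasurableSpace Ω] [Countable α]
    {P : Measure Ω} [IsProbabilityMeasure P] {Y : Ω → α}
    (hY : ∑' a, P (Y ⁻¹' {a}) = 1) (A : Set α) :
    P (Y ⁻¹' A) = ∑' a, A.indicator (fun a => P (Y ⁻¹' {a})) a := by
  set S : Set α → ℝ≥0∞ := fun B => ∑' a, B.indicator (fun a => P (Y ⁻¹' {a})) a
  have hle : ∀ B, P (Y ⁻¹' B) ≤ S B := fun B => by
    rw [← Set.biUnion_preimage_singleton]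
    exact (measure_biUnion_le P B.to_countable _).trans_eq (tsum_subtype B fun a => P (Y ⁻¹' {a}))
  have hsplit : S A + S Aᶜ = 1 := by
    rw [← ENNReal.tsum_add, ← hY]
    exact tsum_congr fun a => congrFun (Set.indicator_self_add_compl A _) a
  refine le_antisymm (hle A) (ENNReal.le_of_add_le_add_right (a := S Aᶜ) ?_ ?_)
  · exact ne_top_of_le_ne_top ENNReal.one_ne_top (hsplit ▸ le_add_self)
  · calc S A + S Aᶜ = P (Y ⁻¹' A ∪ Y ⁻¹' Aᶜ) := by
          rw [hsplit, ← Set.preimage_union, Set.union_compl_self, Set.preimage_univ, measure_univ]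
      _ ≤ P (Y ⁻¹' A) + S Aᶜ := (measure_union_le _ _).trans (add_le_add_right (hle Aᶜ) _)

noncomputable def tail (u : ℕ → ℝ≥0∞) (m : ℕ) : ℝ≥0∞ := ∑' k, if m ≤ k then u k else 0

theorem tail_zero (u : ℕ → ℝ≥0∞) : tail u 0 = ∑' k, u k := by
  simp [tail]

theorem tail_eq_tsum_add (u : ℕ → ℝ≥0∞) (m : ℕ) : tail u m = ∑' j, u (j + m) := by
  rw [tail, ← ENNReal.summable.sum_add_tsum_nat_add' (k := m)]
  simp +contextual [Finset.sum_eq_zero, Finset.mem_range]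

/-- Abel summation. -/
theorem tsum_mul_eq_add_tsum_tail (u : ℕ → ℝ≥0∞) {φ : ℕ → ℝ≥0∞} (hφ : Monotone φ) :
    ∑' k, u k * φ k = φ 0 * tail u 0 + ∑' j, (φ (j + 1) - φ j) * tail u (j + 1) := by
  set Δ : ℕ → ℝ≥0∞ := fun j => φ (j + 1) - φ j
  have hφ_eq : ∀ k, φ k = φ 0 + ∑' j, (Set.Iio k).indicator Δ j := fun k => by
    rw [← Finset.coe_range, ← sum_eq_tsum_indicator]
    induction k with
    | zero => simp
    | succ k ih =>
      rw [Finset.sum_range_succ, ← add_assoc, ← ih, add_tsub_cancel_of_le (hφ k.le_succ)]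
  have hswap : ∀ j k, u k * (Set.Iio k).indicator Δ j = Δ j * if j + 1 ≤ k then u k else 0 :=
    fun j k => by by_cases h : j < k <;> simp [h, mul_comm, Nat.not_lt.1]
  calc ∑' k, u k * φ k = ∑' k, (φ 0 * u k + ∑' j, u k * (Set.Iio k).indicator Δ j) := by
        refine tsum_congr fun k => ?_
        rw [hφ_eq k, mul_add, mul_comm, ENNReal.tsum_mul_left]
    _ = φ 0 * tail u 0 + ∑' j, Δ j * tail u (j + 1) := by
        simp only [ENNReal.tsum_add, ENNReal.tsum_mul_left, hswap, tail_zero]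
        rw [ENNReal.tsum_comm]
        simp only [ENNReal.tsum_mul_left, tail]

theorem tsum_mul_le_tsum_mul_of_tail_le {u v φ : ℕ → ℝ≥0∞} (huv : ∀ m, tail u m ≤ tail v m)
    (hφ : Monotone φ) : ∑' k, u k * φ k ≤ ∑' k, v k * φ k := by
  rw [tsum_mul_eq_add_tsum_tail u hφ, tsum_mul_eq_add_tsum_tail v hφ]
  gcongr with j
  exacts [huv 0, huv (j + 1)]

noncomputable def geomPmf (p : ℝ) (k : ℕ) : ℝ≥0∞ :=
  if k = 0 then 0 else ENNReal.ofReal (p * (1 - p) ^ (k - 1))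

theorem tail_geomPmf {p : ℝ} (hp0 : 0 < p) (hp1 : p ≤ 1) (m : ℕ) :
    tail (geomPmf p) m = ENNReal.ofReal (1 - p) ^ (m - 1) := by
  have hsucc : ∀ s, tail (geomPmf p) (s + 1) = ENNReal.ofReal (1 - p) ^ s := fun s => by
    have hterm : ∀ j, geomPmf p (j + (s + 1))
        = ENNReal.ofReal p * ENNReal.ofReal (1 - p) ^ s * ENNReal.ofReal (1 - p) ^ j := fun j => by
      rw [geomPmf, if_neg (by omega), ENNReal.ofReal_mul hp0.le,
        ENNReal.ofReal_pow (by linarith), show j + (s + 1) - 1 = s + j by omega, pow_add, mul_assoc]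
    have hcompl : 1 - ENNReal.ofReal (1 - p) = ENNReal.ofReal p := by
      rw [← ENNReal.ofReal_one, ← ENNReal.ofReal_sub _ (by linarith), sub_sub_cancel]
    rw [tail_eq_tsum_add, tsum_congr hterm, ENNReal.tsum_mul_left, ENNReal.tsum_geometric, hcompl,
      mul_right_comm, ENNReal.mul_inv_cancel (by simpa using hp0) ENNReal.ofReal_ne_top, one_mul]
  cases m with
  | zero =>
    rw [← hsucc 0]
    exact tsum_congr fun k => by cases k <;> simp [geomPmf]
  | succ s => exact hsucc s

theorem tsum_geomPmf {p : ℝ} (hp0 : 0 < p) (hp1 : p ≤ 1) : ∑' k, geomPmf p k = 1 := by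
  rw [← tail_zero, tail_geomPmf hp0 hp1, pow_zero]

theorem tail_geomPmf_anti {p q : ℝ} (hq0 : 0 < q) (hqp : q ≤ p) (hp1 : p ≤ 1) (m : ℕ) :
    tail (geomPmf p) m ≤ tail (geomPmf q) m := by
  rw [tail_geomPmf (hq0.trans_le hqp) hp1, tail_geomPmf hq0 (hqp.trans hp1)]
  gcongr

theorem one_sub_div_pos {k d : ℕ} (h : k < d) : 0 < 1 - (k : ℝ) / d :=
  sub_pos.2 ((div_lt_one (by exact_mod_cast k.zero_le.trans_lt h)).2 (by exact_mod_cast h))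

theorem tsum_geomPmf_one_sub_div {k d : ℕ} (h : k < d) : ∑' j, geomPmf (1 - k / d) j = 1 :=
  tsum_geomPmf (one_sub_div_pos h) (sub_le_self _ (by positivity))

theorem tail_geomPmf_one_sub_div_anti {k T d : ℕ} (hkT : k ≤ T) (hTd : T < d) (m : ℕ) :
    tail (geomPmf (1 - k / d)) m ≤ tail (geomPmf (1 - T / d)) m :=
  tail_geomPmf_anti (one_sub_div_pos hTd) (by gcongr) (sub_le_self _ (by positivity)) m

/-- `P(X₁ + ⋯ + Xₙ ≥ s)` for independent `Xᵢ` with mass functions `w i`. -/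
noncomputable def sumTail {ι : Type*} [Fintype ι] (w : ι → ℕ → ℝ≥0∞) (s : ℕ) : ℝ≥0∞ :=
  ∑' f : ι → ℕ, if s ≤ ∑ i, f i then ∏ i, w i (f i) else 0

theorem sumTail_comp_equiv {ι κ : Type*} [Fintype ι] [Fintype κ] (e : ι ≃ κ)
    (w : ι → ℕ → ℝ≥0∞) (s : ℕ) : sumTail (fun j => w (e.symm j)) s = sumTail w s := by
  rw [sumTail, ← (e.arrowCongr (Equiv.refl ℕ)).tsum_eq]
  refine tsum_congr fun f => ?_
  simp only [Equiv.arrowCongr_apply, Equiv.coe_refl, Function.comp_apply, id,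
    Equiv.sum_comp e.symm f, Equiv.prod_comp e.symm fun i => w i (f i)]

theorem sumTail_fin_succ {n : ℕ} (w : Fin (n + 1) → ℕ → ℝ≥0∞) (s : ℕ) :
    sumTail w s = ∑' k, w 0 k * sumTail (fun i : Fin n => w i.succ) (s - k) := by
  rw [sumTail, ← (Fin.consEquiv fun _ => ℕ).tsum_eq, ENNReal.tsum_prod']
  refine tsum_congr fun k => ?_
  rw [sumTail, ← ENNReal.tsum_mul_left]
  refine tsum_congr fun f => ?_
  simp only [Fin.consEquiv_apply, Fin.sum_cons, Fin.prod_univ_succ, Fin.cons_zero, Fin.cons_succ]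
  by_cases h : s ≤ k + ∑ i, f i
  · rw [if_pos h, if_pos (by omega)]
  · rw [if_neg h, if_neg (by omega), mul_zero]

theorem sumTail_antitone {ι : Type*} [Fintype ι] (w : ι → ℕ → ℝ≥0∞) : Antitone (sumTail w) :=
  fun s t hst => ENNReal.tsum_le_tsum fun f => by
    by_cases hf : t ≤ ∑ i, f i
    · rw [if_pos hf, if_pos (hst.trans hf)]
    · rw [if_neg hf]; exact bot_le

theorem sumTail_zero {ι : Type*} [Fintype ι] {w : ι → ℕ → ℝ≥0∞} (hw : ∀ i, ∑' k, w i k = 1) :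
    sumTail w 0 = 1 := by
  suffices ∀ n (v : Fin n → ℕ → ℝ≥0∞), (∀ i, ∑' k, v i k = 1) → sumTail v 0 = 1 by
    rw [← sumTail_comp_equiv (Fintype.equivFin ι)]
    exact this _ _ fun j => hw _
  intro n
  induction n with
  | zero => intro v _; simp [sumTail]
  | succ n ih =>
    intro v hv
    simp only [sumTail_fin_succ, Nat.zero_sub, ih _ fun i => hv i.succ, mul_one, hv 0]

theorem sumTail_fin_mono {n : ℕ} {w v : Fin n → ℕ → ℝ≥0∞}
    (hwv : ∀ i m, tail (w i) m ≤ tail (v i) m) (s : ℕ) : sumTail w s ≤ sumTail v s := by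
  induction n generalizing s with
  | zero => rfl
  | succ n ih =>
    rw [sumTail_fin_succ, sumTail_fin_succ]
    calc ∑' k, w 0 k * sumTail (fun i : Fin n => w i.succ) (s - k)
        ≤ ∑' k, w 0 k * sumTail (fun i : Fin n => v i.succ) (s - k) :=
          ENNReal.tsum_le_tsum fun k => by gcongr; exact ih (fun i => hwv i.succ) _
      _ ≤ ∑' k, v 0 k * sumTail (fun i : Fin n => v i.succ) (s - k) :=
          tsum_mul_le_tsum_mul_of_tail_le (hwv 0) fun _ _ hk =>
            sumTail_antitone _ (Nat.sub_le_sub_left hk s)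

theorem sumTail_fin_succ_le {n : ℕ} {w : Fin (n + 1) → ℕ → ℝ≥0∞} (hw : ∑' k, w 0 k = 1)
    (s : ℕ) : sumTail (fun i : Fin n => w i.succ) s ≤ sumTail w s := by
  rw [sumTail_fin_succ]
  calc sumTail (fun i : Fin n => w i.succ) s
      = ∑' k, w 0 k * sumTail (fun i : Fin n => w i.succ) s := by
        rw [ENNReal.tsum_mul_right, hw, one_mul]
    _ ≤ ∑' k, w 0 k * sumTail (fun i : Fin n => w i.succ) (s - k) :=
        ENNReal.tsum_le_tsum fun k => by gcongr; exact sumTail_antitone _ (Nat.sub_le s k)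

theorem sumTail_const_mono {u : ℕ → ℝ≥0∞} (hu : ∑' k, u k = 1) {n m : ℕ} (hnm : n ≤ m) (s : ℕ) :
    sumTail (fun _ : Fin n => u) s ≤ sumTail (fun _ : Fin m => u) s := by
  induction m, hnm using Nat.le_induction with
  | base => rfl
  | succ m _ ih => exact ih.trans (sumTail_fin_succ_le hu s)

theorem measure_setOf_le_sum_eq_sumTail {Ω ι : Type*} [MeasurableSpace Ω] [Fintype ι]
    {P : Measure Ω} [IsProbabilityMeasure P] {X : ι → Ω → ℕ} {w : ι → ℕ → ℝ≥0∞}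
    (hX : ∀ f : ι → ℕ, P {ω | ∀ i, X i ω = f i} = ∏ i, w i (f i))
    (hw : ∀ i, ∑' k, w i k = 1) (s : ℕ) :
    P {ω | s ≤ ∑ i, X i ω} = sumTail w s := by
  set Y : Ω → ι → ℕ := fun ω i => X i ω
  have hfiber : ∀ f, P (Y ⁻¹' {f}) = ∏ i, w i (f i) := fun f => by
    rw [← hX]; congr 1; exact Set.ext fun ω => funext_iff
  have hY : ∑' f, P (Y ⁻¹' {f}) = 1 := by
    simpa [hfiber, sumTail] using sumTail_zero hw
  rw [← Set.preimage_ofPred_eq (p := fun f : ι → ℕ => s ≤ ∑ i, f i) (f := Y),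
    measure_preimage_eq_tsum_indicator hY]
  simp only [Set.indicator_apply, Set.mem_ofPred_eq, hfiber, sumTail]

theorem sum_partial_geom_stochDom_general
    {Ω Ω' : Type*} [MeasurableSpace Ω] [MeasurableSpace Ω']
    (P : Measure Ω) (Q : Measure Ω') [IsProbabilityMeasure P] [IsProbabilityMeasure Q]
    (r T d : ℕ) (hTd : T < d)
    (J : Fin r → ℕ) (hJT : ∑ i, J i ≤ T)
    (G : (Σ i : Fin r, Fin (J i)) → Ω → ℕ)
    (hG : ∀ a : Σ i : Fin r, Fin (J i),
      HasGeom P (G a) (1 - ((a.2 : ℕ) : ℝ) / (d : ℝ)))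
    (hGindep : ∀ f : (Σ i : Fin r, Fin (J i)) → ℕ,
      P {ω | ∀ a, G a ω = f a} = ∏ a, P {ω | G a ω = f a})
    (G' : Fin T → Ω' → ℕ)
    (hG' : ∀ m, HasGeom Q (G' m) (1 - (T : ℝ) / (d : ℝ)))
    (hG'indep : ∀ f : Fin T → ℕ,
      Q {ω | ∀ m, G' m ω = f m} = ∏ m, Q {ω | G' m ω = f m}) :
    ∀ t : ℝ,
      P {ω | t ≤ ((∑ a, G a ω : ℕ) : ℝ)} ≤ Q {ω | t ≤ ((∑ m, G' m ω : ℕ) : ℝ)} := by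
  intro t
  simp only [← Nat.ceil_le]
  have ha_le : ∀ a : Σ i : Fin r, Fin (J i), (a.2 : ℕ) ≤ T := fun a =>
    a.2.is_lt.le.trans ((Finset.single_le_sum_of_canonicallyOrdered (Finset.mem_univ _)).trans hJT)
  have hcard : Fintype.card (Σ i : Fin r, Fin (J i)) ≤ T := by simpa [Fintype.card_sigma] using hJT
  rw [measure_setOf_le_sum_eq_sumTail
      (fun f => (hGindep f).trans (Finset.prod_congr rfl fun a _ => hG a (f a)))
      (fun a => tsum_geomPmf_one_sub_div ((ha_le a).trans_lt hTd)),
    measure_setOf_le_sum_eq_sumTail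
      (fun f => (hG'indep f).trans (Finset.prod_congr rfl fun m _ => hG' m (f m)))
      (fun _ => tsum_geomPmf_one_sub_div hTd),
    ← sumTail_comp_equiv (Fintype.equivFin _)]
  exact (sumTail_fin_mono (fun j => tail_geomPmf_one_sub_div_anti (ha_le _) hTd) _).trans
    (sumTail_const_mono (tsum_geomPmf_one_sub_div hTd) hcard _)

/-- Let `r ≥ 1`, `r ≤ T < d`, `1 ≤ d`, and let `J 1, ..., J r` be
positive integers with `J 1 + ... + J r ≤ T`. For each `i` let
`S i = G i 1 + ... + G i (J i)` where the `G i k` are mutually independent geometric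
random variables (over all pairs `(i,k)`), `G i k` with parameter `1 - (k-1)/d`
(indexed here by `k : Fin (J i)`, with parameter `1 - k/d`). Then
`S 1 + ... + S r ≼ G' 1 + ... + G' T` where the `G' m` are mutually independent
geometric random variables, each with parameter `1 - T/d`. -/
theorem sum_partial_geom_stochDom
    {Ω Ω' : Type*} [MeasurableSpace Ω] [MeasurableSpace Ω']
    (P : Measure Ω) (Q : Measure Ω') [IsProbabilityMeasure P] [IsProbabilityMeasure Q]
    (r T d : ℕ) (hr : 1 ≤ r) (hrT : r ≤ T) (hd : 1 ≤ d) (hTd : T < d)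
    (J : Fin r → ℕ) (hJ : ∀ i, 1 ≤ J i) (hJT : ∑ i, J i ≤ T)
    (G : (Σ i : Fin r, Fin (J i)) → Ω → ℕ)
    (hG : ∀ a : Σ i : Fin r, Fin (J i),
      HasGeom P (G a) (1 - ((a.2 : ℕ) : ℝ) / (d : ℝ)))
    (hGindep : ∀ f : (Σ i : Fin r, Fin (J i)) → ℕ,
      P {ω | ∀ a, G a ω = f a} = ∏ a, P {ω | G a ω = f a})
    (G' : Fin T → Ω' → ℕ)
    (hG' : ∀ m, HasGeom Q (G' m) (1 - (T : ℝ) / (d : ℝ)))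
    (hG'indep : ∀ f : Fin T → ℕ,
      Q {ω | ∀ m, G' m ω = f m} = ∏ m, Q {ω | G' m ω = f m}) :
    ∀ t : ℝ,
      P {ω | t ≤ ((∑ a, G a ω : ℕ) : ℝ)} ≤ Q {ω | t ≤ ((∑ m, G' m ω : ℕ) : ℝ)} :=
  sum_partial_geom_stochDom_general P Q r T d hTd J hJT G hG hGindep G' hG' hG'indep

end RumorSpreading
end
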